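/- arXiv:2310.06997 — 2 statements merged into one kernel-verified Lean document; each statement's English description precedes it below -/
import Mathlib

section
/- Let x, y, z, w be positive real numbers with z > w satisfying the system: x·y = 600, (x·(z+w)/2)·(y·w/2) = 129600, z² + w² = 1224, and x·w = y·(z−w). Then x = 20, y = 30, z = 30, and w = 18. -/
/-! The two area equations divide to `(z + w) w = 864`; together with `z² + w² = 1224` this gives a
quadratic in `w²` with roots `324` and `1152`, and positivity of `z w = 864 - w²` rules out the
latter, so `w = 18`, `z = 30`. The similarity relation then reads `3 x = 2 y`, which with `x y = 600`
gives `y = 30`, `x = 20`. -/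

lemma add_mul_eq_div_of_half_mul_half_mul_eq {K : Type*} [Field K] [CharZero K] {x y z w A P : K}
    (hxy : x * y = A) (hA : A ≠ 0) (hP : (x * (z + w) / 2) * (y * w / 2) = P) :
    (z + w) * w = 4 * P / A := by
  rw [eq_div_iff hA, ← hP, ← hxy]
  field_simp
  ring

lemma quadratic_in_sq_of_sq_add_sq_of_add_mul {R : Type*} [CommRing R] {z w s p : R}
    (hs : z ^ 2 + w ^ 2 = s) (hp : (z + w) * w = p) :
    2 * (w ^ 2) ^ 2 - (s + 2 * p) * w ^ 2 + p ^ 2 = 0 := by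
  linear_combination (w ^ 2) * hs - (p + z * w - w ^ 2) * hp

lemma eq_18_and_eq_30_of_sq_add_sq_of_add_mul {z w : ℝ} (hz : 0 < z) (hw : 0 < w)
    (hs : z ^ 2 + w ^ 2 = 1224) (hp : (z + w) * w = 864) : w = 18 ∧ z = 30 := by
  have hroots : (w ^ 2 - 324) * (w ^ 2 - 1152) = 0 := by
    linear_combination (1 / 2 : ℝ) * quadratic_in_sq_of_sq_add_sq_of_add_mul hs hp
  have hw2 : w ^ 2 = 324 := by
    rcases mul_eq_zero.mp hroots with h | h
    · exact sub_eq_zero.mp h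
    · have hzw : z * w = 864 - w ^ 2 := by linear_combination hp
      linarith [mul_pos hz hw]
  have hw18 : w = 18 := by
    rw [← pow_left_inj₀ hw.le (by norm_num : (0 : ℝ) ≤ 18) two_ne_zero, hw2]
    norm_num
  subst hw18
  exact ⟨rfl, by linarith⟩

theorem smt18_solution_general (x y z w : ℝ) (hy : 0 < y) (hz : 0 < z)
    (hw : 0 < w)
    (h1 : x * y = 600)
    (h2 : (x * (z + w) / 2) * (y * w / 2) = 129600)
    (h3 : z ^ 2 + w ^ 2 = 1224)
    (h4 : x * w = y * (z - w)) :
    x = 20 ∧ y = 30 ∧ z = 30 ∧ w = 18 := by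
  have hp : (z + w) * w = 864 := by
    rw [add_mul_eq_div_of_half_mul_half_mul_eq h1 (by norm_num) h2]
    norm_num
  obtain ⟨rfl, rfl⟩ := eq_18_and_eq_30_of_sq_add_sq_of_add_mul hz hw h3 hp
  have hy2 : y ^ 2 = 30 ^ 2 := by linear_combination (3 / 2 : ℝ) * h1 - (y / 12) * h4
  have hy30 : y = 30 := (pow_left_inj₀ hy.le (by norm_num) two_ne_zero).mp hy2
  subst hy30
  exact ⟨by linarith, rfl, rfl, rfl⟩

theorem smt18_solution (x y z w : ℝ) (hx : 0 < x) (hy : 0 < y) (hz : 0 < z)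
    (hw : 0 < w) (hzw : z > w)
    (h1 : x * y = 600)
    (h2 : (x * (z + w) / 2) * (y * w / 2) = 129600)
    (h3 : z ^ 2 + w ^ 2 = 1224)
    (h4 : x * w = y * (z - w)) :
    x = 20 ∧ y = 30 ∧ z = 30 ∧ w = 18 :=
  smt18_solution_general x y z w hy hz hw h1 h2 h3 h4
end

section
/- Let X, Y be real numbers with X + Y = 2952, X·Y = 1492992, and X ≥ Y. Then X = 2304 and Y = 648. -/
/-! The Babylonian method: with half-sum `s / 2` and half-difference `d = (x - y) / 2` one has
`d ^ 2 = (s / 2) ^ 2 - x * y`, so `x = s / 2 + d` and `y = s / 2 - d`. Here `(s / 2) ^ 2 - x * y = 828 ^ 2`. -/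

theorem half_sub_eq_sqrt_of_add_eq_of_mul_eq {x y s p : ℝ} (hs : x + y = s) (hp : x * y = p)
    (hyx : y ≤ x) : (x - y) / 2 = √((s / 2) ^ 2 - p) := by
  have hsq : (s / 2) ^ 2 - p = ((x - y) / 2) ^ 2 := by
    subst hs hp
    ring
  rw [hsq, Real.sqrt_sq (by linarith)]

theorem eq_half_add_sqrt_of_add_eq_of_mul_eq {x y s p : ℝ} (hs : x + y = s) (hp : x * y = p)
    (hyx : y ≤ x) : x = s / 2 + √((s / 2) ^ 2 - p) ∧ y = s / 2 - √((s / 2) ^ 2 - p) := by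
  rw [← half_sub_eq_sqrt_of_add_eq_of_mul_eq hs hp hyx]
  constructor <;> linarith

theorem smt18_completing_square (X Y : ℝ)
    (h1 : X + Y = 2952) (h2 : X * Y = 1492992) (h3 : X ≥ Y) :
    X = 2304 ∧ Y = 648 := by
  have hroot : √((2952 / 2) ^ 2 - 1492992 : ℝ) = 828 := by
    rw [show (2952 / 2) ^ 2 - 1492992 = (828 : ℝ) ^ 2 by norm_num]
    exact Real.sqrt_sq (by norm_num)
  obtain ⟨hX, hY⟩ := eq_half_add_sqrt_of_add_eq_of_mul_eq h1 h2 h3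
  rw [hroot] at hX hY
  constructor <;> linarith
end
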